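/- For every Schwartz function ζ on ℝ and every Schwartz function f on ℝ, the Landau operator maps the Wigner-type transform W(ζ, f) to W(ζ̃, f), where ζ̃ := −ζ'' + b² x² ζ; that is, L_A[W(ζ,f)](x₁,x₂) = W(−ζ'' + b²(·)²ζ, f)(x₁,x₂) for all (x₁,x₂) ∈ ℝ². In particular, if ζ = φₙ then L_A[W(φₙ,f)] = b(2n+1) W(φₙ,f). -/

import Mathlib

open MeasureTheory Real

/-- Wigner-type transform: `W(φ,g)(x₁,x₂) = (2π)^{-1/2} ∫ e^{-i k x₂} φ(x₁ - k/b) g(k) dk`. -/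
noncomputable def wigner (b : ℝ) (φ g : ℝ → ℂ) : ℝ × ℝ → ℂ := fun x =>
  (Real.sqrt (2 * π))⁻¹ *
    ∫ k : ℝ, Complex.exp (-Complex.I * k * x.2) * φ (x.1 - k / b) * g k

/-- The Landau operator with gauge `A = b(0, x₁, 0)`:
`(L_A f)(x₁,x₂) = −∂²_{x₁} f − ∂²_{x₂} f − 2 i b x₁ ∂_{x₂} f + b² x₁² f`. -/
noncomputable def landauOp (b : ℝ) (f : ℝ × ℝ → ℂ) : ℝ × ℝ → ℂ := fun x =>
  -(deriv (deriv (fun t => f (t, x.2))) x.1)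
    - deriv (deriv (fun t => f (x.1, t))) x.2
    - 2 * Complex.I * b * x.1 * deriv (fun t => f (x.1, t)) x.2
    + b ^ 2 * x.1 ^ 2 * f x

/-- The `n`-th physicists' Hermite polynomial (as a function). -/
noncomputable def physHermite (n : ℕ) (x : ℝ) : ℝ :=
  (-1 : ℝ) ^ n * Real.exp (x ^ 2) * iteratedDeriv n (fun y => Real.exp (-(y ^ 2))) x

/-- The Landau eigenfunctions `φₙ(x) = aₙ b^{1/4} Hₙ(√b x) e^{−b x²/2}`,
`aₙ = (2ⁿ n!)^{−1/2} π^{−1/4}`. -/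
noncomputable def landauPhi (b : ℝ) (n : ℕ) (x : ℝ) : ℝ :=
  (Real.sqrt (2 ^ n * Nat.factorial n))⁻¹ * (π ^ ((1 : ℝ) / 4))⁻¹ *
    b ^ ((1 : ℝ) / 4) * physHermite n (Real.sqrt b * x) * Real.exp (-(b * x ^ 2) / 2)

/-! In `W(φ, g)` the variable `x₂` only enters through `e^{-ikx₂}`, so `-i∂_{x₂}` multiplies `g(k)`
by `-k`, while `∂_{x₁}` falls on `φ`. Since `b x₁ - k = b (x₁ - k/b)`, the magnetic part
`(-i∂_{x₂} + b x₁)²` of `L_A` becomes multiplication of `φ` by `b² y²` at `y = x₁ - k/b`, whence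
`L_A W(φ, g) = W(-φ'' + b² y² φ, g)`. Differentiation under the integral sign is dominated using
bounds on `φ, φ', φ''` and the moments of `g` up to order two. The eigenfunctions are
`φₙ = P e^{-b y²/2}` with `P` a rescaled Hermite polynomial; the Hermite equation
`Hₙ'' - 2x Hₙ' + 2n Hₙ = 0` turns into `-φₙ'' + b² y² φₙ = b(2n+1) φₙ`, and Gaussian decay makes
`φₙ` and its derivatives bounded. -/

open Filter Topology
open scoped Complex ZeroAtInfty
open Complex (I)

section Wigner

variable {b : ℝ} {η η' η'' g : ℝ → ℂ}

lemma norm_cexp_neg_I_mul (k s : ℝ) : ‖cexp (-I * k * s)‖ = 1 := by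
  rw [show -I * k * s = ((-(k * s) : ℝ) : ℂ) * I by push_cast; ring, Complex.norm_exp_ofReal_mul_I]

lemma integrable_wigner_integrand (hη : Measurable η) {C : ℝ} (hC : ∀ y, ‖η y‖ ≤ C)
    (hg : Integrable g) (t s : ℝ) :
    Integrable fun k : ℝ => cexp (-I * k * s) * η (t - k / b) * g k := by
  refine hg.bdd_mul (c := C) ?_ (ae_of_all _ fun k => ?_)
  · exact (by fun_prop : Continuous fun k : ℝ => cexp (-I * k * s)).aestronglyMeasurable.mul
      (hη.comp (by fun_prop)).aestronglyMeasurable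
  · rw [norm_mul, norm_cexp_neg_I_mul, one_mul]
    exact hC _

lemma hasDerivAt_wigner_fst (hη : ∀ y, HasDerivAt η (η' y) y) {C₀ C₁ : ℝ}
    (hC₀ : ∀ y, ‖η y‖ ≤ C₀) (hC₁ : ∀ y, ‖η' y‖ ≤ C₁) (hg : Integrable g) (t s : ℝ) :
    HasDerivAt (fun t => wigner b η g (t, s)) (wigner b η' g (t, s)) t := by
  have hη_meas : Measurable η :=
    (continuous_iff_continuousAt.2 fun y => (hη y).continuousAt).measurable
  have hη'_meas : Measurable η' := by
    rw [show η' = deriv η from funext fun y => (hη y).deriv.symm]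
    exact measurable_deriv η
  refine HasDerivAt.const_mul _ (hasDerivAt_integral_of_dominated_loc_of_deriv_le
    (F := fun (t k : ℝ) => cexp (-I * k * s) * η (t - k / b) * g k)
    (F' := fun (t k : ℝ) => cexp (-I * k * s) * η' (t - k / b) * g k)
    (bound := fun k => C₁ * ‖g k‖) (Metric.ball_mem_nhds t one_pos)
    (Eventually.of_forall fun t => (integrable_wigner_integrand hη_meas hC₀ hg t s).1)
    (integrable_wigner_integrand hη_meas hC₀ hg t s)
    (integrable_wigner_integrand hη'_meas hC₁ hg t s).1
    (ae_of_all _ fun k t _ => ?_) (hg.norm.const_mul C₁)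
    (ae_of_all _ fun k t _ => ?_)).2
  · rw [norm_mul, norm_mul, norm_cexp_neg_I_mul, one_mul]
    exact mul_le_mul_of_nonneg_right (hC₁ _) (norm_nonneg _)
  · exact (((hη _).comp_sub_const t (k / b)).const_mul _).mul_const _

lemma integrable_neg_I_mul (hg₁ : Integrable fun k : ℝ => (k : ℂ) * g k) :
    Integrable fun k : ℝ => -I * k * g k := by
  simpa only [mul_assoc] using hg₁.const_mul (-I)

lemma hasDerivAt_wigner_snd (hη : Measurable η) {C : ℝ} (hC : ∀ y, ‖η y‖ ≤ C)
    (hg : Integrable g) (hg₁ : Integrable fun k : ℝ => (k : ℂ) * g k) (t s : ℝ) :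
    HasDerivAt (fun s => wigner b η g (t, s)) (wigner b η (fun k => -I * k * g k) (t, s)) s := by
  refine HasDerivAt.const_mul _ (hasDerivAt_integral_of_dominated_loc_of_deriv_le
    (F := fun (s k : ℝ) => cexp (-I * k * s) * η (t - k / b) * g k)
    (F' := fun (s k : ℝ) => cexp (-I * k * s) * η (t - k / b) * (-I * k * g k))
    (bound := fun k : ℝ => C * ‖(k : ℂ) * g k‖) (Metric.ball_mem_nhds s one_pos)
    (Eventually.of_forall fun s => (integrable_wigner_integrand hη hC hg t s).1)
    (integrable_wigner_integrand hη hC hg t s)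
    (integrable_wigner_integrand hη hC (integrable_neg_I_mul hg₁) t s).1
    (ae_of_all _ fun k s _ => ?_) (hg₁.norm.const_mul C)
    (ae_of_all _ fun k s _ => ?_)).2
  · rw [norm_mul, norm_mul, norm_cexp_neg_I_mul, one_mul, mul_assoc, norm_mul (-I), norm_neg,
      Complex.norm_I, one_mul]
    exact mul_le_mul_of_nonneg_right (hC _) (norm_nonneg _)
  · have he : HasDerivAt (fun s : ℝ => cexp (-I * k * s)) (cexp (-I * k * s) * (-I * k)) s := by
      simpa using ((Complex.ofRealCLM.hasDerivAt (x := s)).const_mul (-I * k)).cexp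
    exact ((he.mul_const _).mul_const _).congr_deriv (by ring)

lemma deriv_deriv_wigner_fst (hη : ∀ y, HasDerivAt η (η' y) y)
    (hη' : ∀ y, HasDerivAt η' (η'' y) y) {C₀ C₁ C₂ : ℝ} (hC₀ : ∀ y, ‖η y‖ ≤ C₀)
    (hC₁ : ∀ y, ‖η' y‖ ≤ C₁) (hC₂ : ∀ y, ‖η'' y‖ ≤ C₂) (hg : Integrable g) (t s : ℝ) :
    deriv (deriv fun t => wigner b η g (t, s)) t = wigner b η'' g (t, s) := by
  rw [show deriv (fun t => wigner b η g (t, s)) = fun t => wigner b η' g (t, s) from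
    funext fun t => (hasDerivAt_wigner_fst hη hC₀ hC₁ hg t s).deriv]
  exact (hasDerivAt_wigner_fst hη' hC₁ hC₂ hg t s).deriv

lemma deriv_deriv_wigner_snd (hη : Measurable η) {C : ℝ} (hC : ∀ y, ‖η y‖ ≤ C)
    (hg : Integrable g) (hg₁ : Integrable fun k : ℝ => (k : ℂ) * g k)
    (hg₂ : Integrable fun k : ℝ => (k : ℂ) ^ 2 * g k) (t s : ℝ) :
    deriv (deriv fun s => wigner b η g (t, s)) s =
      wigner b η (fun k => -I * k * (-I * k * g k)) (t, s) := by
  rw [show deriv (fun s => wigner b η g (t, s)) = fun s => wigner b η (fun k => -I * k * g k) (t, s)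
    from funext fun s => (hasDerivAt_wigner_snd hη hC hg hg₁ t s).deriv]
  have hIg₁ : Integrable fun k : ℝ => (k : ℂ) * (-I * k * g k) :=
    (hg₂.const_mul (-I)).congr (ae_of_all _ fun k => by ring)
  exact (hasDerivAt_wigner_snd hη hC (integrable_neg_I_mul hg₁) hIg₁ t s).deriv

theorem landauOp_wigner_eq (hb : b ≠ 0) (hη : ∀ y, HasDerivAt η (η' y) y)
    (hη' : ∀ y, HasDerivAt η' (η'' y) y) {C₀ C₁ C₂ : ℝ} (hC₀ : ∀ y, ‖η y‖ ≤ C₀)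
    (hC₁ : ∀ y, ‖η' y‖ ≤ C₁) (hC₂ : ∀ y, ‖η'' y‖ ≤ C₂) (hg : Integrable g)
    (hg₁ : Integrable fun k : ℝ => (k : ℂ) * g k)
    (hg₂ : Integrable fun k : ℝ => (k : ℂ) ^ 2 * g k) (x : ℝ × ℝ) :
    landauOp b (wigner b η g) x = wigner b (fun y => -η'' y + (b : ℂ) ^ 2 * y ^ 2 * η y) g x := by
  have hη_meas : Measurable η :=
    (continuous_iff_continuousAt.2 fun y => (hη y).continuousAt).measurable
  have hη''_meas : Measurable η'' := by
    rw [show η'' = deriv η' from funext fun y => (hη' y).deriv.symm]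
    exact measurable_deriv η'
  have hIIg : Integrable fun k : ℝ => -I * k * (-I * k * g k) :=
    (hg₂.const_mul (-1)).congr (ae_of_all _ fun k => by
      linear_combination -(k : ℂ) ^ 2 * g k * Complex.I_sq)
  have hpt : ∀ k : ℝ, cexp (-I * k * x.2) * (-η'' (x.1 - k / b) +
      (b : ℂ) ^ 2 * ((x.1 - k / b : ℝ) : ℂ) ^ 2 * η (x.1 - k / b)) * g k =
      -(cexp (-I * k * x.2) * η'' (x.1 - k / b) * g k)
      - cexp (-I * k * x.2) * η (x.1 - k / b) * (-I * k * (-I * k * g k))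
      - 2 * I * b * x.1 * (cexp (-I * k * x.2) * η (x.1 - k / b) * (-I * k * g k))
      + b ^ 2 * x.1 ^ 2 * (cexp (-I * k * x.2) * η (x.1 - k / b) * g k) := by
    intro k
    have hk : (b : ℂ) * (k / b) = k := mul_div_cancel₀ _ (by exact_mod_cast hb)
    push_cast
    linear_combination cexp (-I * k * x.2) * η (x.1 - k / b) * g k *
      ((-2 * b * x.1 + b * (k / b) + k) * hk + (k ^ 2 - 2 * b * x.1 * k) * Complex.I_sq)
  have hA := integrable_wigner_integrand (b := b) hη''_meas hC₂ hg x.1 x.2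
  have hB := integrable_wigner_integrand (b := b) hη_meas hC₀ hIIg x.1 x.2
  have hC := integrable_wigner_integrand (b := b) hη_meas hC₀ (integrable_neg_I_mul hg₁) x.1 x.2
  have hD := integrable_wigner_integrand (b := b) hη_meas hC₀ hg x.1 x.2
  simp only [landauOp, deriv_deriv_wigner_fst hη hη' hC₀ hC₁ hC₂ hg,
    deriv_deriv_wigner_snd hη_meas hC₀ hg hg₁ hg₂,
    (hasDerivAt_wigner_snd hη_meas hC₀ hg hg₁ x.1 x.2).deriv]
  simp only [wigner, hpt]
  rw [integral_add, integral_sub, integral_sub, integral_neg, integral_const_mul,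
    integral_const_mul]
  · ring
  all_goals fun_prop

end Wigner

namespace SchwartzMap

lemma integrable_ofReal_pow_mul (f : 𝓢(ℝ, ℂ)) (n : ℕ) :
    Integrable fun k : ℝ => (k : ℂ) ^ n * f k :=
  (f.integrable_pow_mul volume n).mono' (by fun_prop) (ae_of_all _ fun k => by simp [norm_pow])

lemma coe_derivCLM (f : 𝓢(ℝ, ℂ)) : ⇑(derivCLM ℝ ℂ f) = deriv f :=
  funext (derivCLM_apply ℝ f)

end SchwartzMap

section Gaussian

open Polynomial

variable {a : ℝ}

noncomputable def polyGaussian (a : ℝ) (P : ℝ[X]) (y : ℝ) : ℝ :=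
  P.eval y * Real.exp (-(a * y ^ 2) / 2)

noncomputable def gaussDeriv (a : ℝ) (P : ℝ[X]) : ℝ[X] := derivative P - C a * X * P

lemma hasDerivAt_polyGaussian (a : ℝ) (P : ℝ[X]) (y : ℝ) :
    HasDerivAt (polyGaussian a P) (polyGaussian a (gaussDeriv a P) y) y := by
  have he : HasDerivAt (fun y : ℝ => -(a * y ^ 2) / 2) (-(a * y)) y := by
    simpa using (((hasDerivAt_pow 2 y).const_mul a).neg.div_const 2).congr_deriv (by ring)
  refine ((P.hasDerivAt y).mul he.exp).congr_deriv ?_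
  simp only [polyGaussian, gaussDeriv, eval_sub, eval_mul, eval_C, eval_X]
  ring

lemma continuous_polyGaussian (a : ℝ) (P : ℝ[X]) : Continuous (polyGaussian a P) :=
  continuous_iff_continuousAt.2 fun y => (hasDerivAt_polyGaussian a P y).continuousAt

lemma tendsto_polyGaussian_cocompact (ha : 0 < a) (P : ℝ[X]) :
    Tendsto (polyGaussian a P) (cocompact ℝ) (𝓝 0) := by
  have hmon : ∀ i : ℕ, Tendsto (fun y : ℝ => y ^ i * Real.exp (-(a * y ^ 2) / 2))
      (cocompact ℝ) (𝓝 0) := fun i => by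
    rw [tendsto_zero_iff_norm_tendsto_zero]
    convert tendsto_rpow_abs_mul_exp_neg_mul_sq_cocompact (half_pos ha) i using 2 with y
    rw [norm_mul, norm_pow, Real.norm_eq_abs, Real.norm_eq_abs, Real.abs_exp, Real.rpow_natCast]
    ring_nf
  have hsum := tendsto_finsetSum (Finset.range (P.natDegree + 1))
    fun i _ => (hmon i).const_mul (P.coeff i)
  simp only [mul_zero, Finset.sum_const_zero] at hsum
  convert hsum using 2 with y
  rw [polyGaussian, eval_eq_sum_range, Finset.sum_mul]
  simp only [mul_assoc]

lemma exists_norm_polyGaussian_le (ha : 0 < a) (P : ℝ[X]) :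
    ∃ C, ∀ y, ‖(polyGaussian a P y : ℂ)‖ ≤ C := by
  let F : C₀(ℝ, ℝ) := ⟨⟨polyGaussian a P, continuous_polyGaussian a P⟩,
    tendsto_polyGaussian_cocompact ha P⟩
  obtain ⟨C, hC⟩ := isBounded_iff_forall_norm_le.1 F.isBounded_range
  exact ⟨C, fun y => by rw [Complex.norm_real]; exact hC _ ⟨y, rfl⟩⟩

lemma landauOp_wigner_polyGaussian {b : ℝ} (hb : 0 < b) (P : ℝ[X]) {g : ℝ → ℂ}
    (hg : Integrable g) (hg₁ : Integrable fun k : ℝ => (k : ℂ) * g k)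
    (hg₂ : Integrable fun k : ℝ => (k : ℂ) ^ 2 * g k) (x : ℝ × ℝ) :
    landauOp b (wigner b (fun y => (polyGaussian b P y : ℂ)) g) x =
      wigner b (fun y => -(polyGaussian b (gaussDeriv b (gaussDeriv b P)) y : ℂ) +
        (b : ℂ) ^ 2 * y ^ 2 * (polyGaussian b P y : ℂ)) g x := by
  have hderiv : ∀ Q y, HasDerivAt (fun y => (polyGaussian b Q y : ℂ))
      (polyGaussian b (gaussDeriv b Q) y : ℂ) y := fun Q y =>
    (hasDerivAt_polyGaussian b Q y).ofReal_comp
  obtain ⟨C₀, hC₀⟩ := exists_norm_polyGaussian_le hb P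
  obtain ⟨C₁, hC₁⟩ := exists_norm_polyGaussian_le hb (gaussDeriv b P)
  obtain ⟨C₂, hC₂⟩ := exists_norm_polyGaussian_le hb (gaussDeriv b (gaussDeriv b P))
  exact landauOp_wigner_eq hb.ne' (hderiv P) (hderiv _) hC₀ hC₁ hC₂ hg hg₁ hg₂ x

end Gaussian

section Hermite

open Polynomial

noncomputable def physHermitePoly : ℕ → ℝ[X]
  | 0 => 1
  | n + 1 => 2 * X * physHermitePoly n - derivative (physHermitePoly n)

lemma iteratedDeriv_polyGaussian_two_one (n : ℕ) :
    iteratedDeriv n (polyGaussian 2 1) = polyGaussian 2 (C ((-1) ^ n) * physHermitePoly n) := by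
  induction n with
  | zero => simp [physHermitePoly]
  | succ n ih =>
    rw [iteratedDeriv_succ, ih]
    ext x
    rw [(hasDerivAt_polyGaussian _ _ x).deriv]
    congr 1
    simp only [gaussDeriv, physHermitePoly, derivative_mul, derivative_C, zero_mul, zero_add,
      pow_succ, map_mul, map_neg, map_one, C_ofNat]
    ring

lemma physHermite_eq_eval (n : ℕ) (x : ℝ) : physHermite n x = (physHermitePoly n).eval x := by
  have hgauss : (fun y : ℝ => Real.exp (-(y ^ 2))) = polyGaussian 2 1 := by
    ext y; simp [polyGaussian, neg_div]
  rw [physHermite, hgauss, iteratedDeriv_polyGaussian_two_one, polyGaussian, eval_mul, eval_C,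
    show -(2 * x ^ 2) / 2 = -(x ^ 2) by ring, Real.exp_neg]
  field_simp
  rw [← pow_mul, pow_mul', neg_one_sq, one_pow, one_mul]

lemma derivative_physHermitePoly_succ (n : ℕ) :
    derivative (physHermitePoly (n + 1)) = 2 * (n + 1) * physHermitePoly n := by
  induction n with
  | zero => simp [physHermitePoly]
  | succ n ih =>
    rw [physHermitePoly, derivative_sub, ih, derivative_mul, derivative_mul, ih]
    simp only [physHermitePoly, derivative_mul, derivative_X, derivative_ofNat, derivative_add,
      derivative_natCast, derivative_one]
    push_cast
    ring

lemma physHermitePoly_ode (n : ℕ) :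
    derivative (derivative (physHermitePoly n)) =
      2 * X * derivative (physHermitePoly n) - 2 * (n : ℝ[X]) * physHermitePoly n := by
  cases n with
  | zero => simp [physHermitePoly]
  | succ n =>
    rw [derivative_physHermitePoly_succ, derivative_mul]
    simp only [derivative_mul, derivative_ofNat, derivative_add, derivative_natCast, derivative_one]
    rw [physHermitePoly]
    push_cast
    ring

noncomputable def landauPoly (b : ℝ) (n : ℕ) : ℝ[X] :=
  C ((Real.sqrt (2 ^ n * Nat.factorial n))⁻¹ * (π ^ ((1 : ℝ) / 4))⁻¹ * b ^ ((1 : ℝ) / 4)) *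
    (physHermitePoly n).comp (C (Real.sqrt b) * X)

lemma landauPhi_eq_polyGaussian (b : ℝ) (n : ℕ) :
    landauPhi b n = polyGaussian b (landauPoly b n) := by
  ext y
  simp only [landauPhi, polyGaussian, landauPoly, physHermite_eq_eval, eval_mul, eval_C,
    eval_comp, eval_X]

lemma gaussDeriv_gaussDeriv_physHermitePoly_comp {a s : ℝ} (hs : s ^ 2 = a) (c : ℝ) (n : ℕ) :
    gaussDeriv a (gaussDeriv a (C c * (physHermitePoly n).comp (C s * X))) =
      (C (a ^ 2) * X ^ 2 - C (a * (2 * n + 1))) * (C c * (physHermitePoly n).comp (C s * X)) := by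
  subst hs
  have hode := congrArg (·.comp (C s * X)) (physHermitePoly_ode n)
  simp only [sub_comp, mul_comp, ofNat_comp, X_comp, natCast_comp] at hode
  simp only [gaussDeriv, derivative_mul, derivative_sub, derivative_C, derivative_comp,
    derivative_X, zero_mul, zero_add, mul_one, hode]
  simp only [map_pow, map_mul, map_add, map_natCast, C_ofNat, map_one, Nat.cast_ofNat]
  ring

lemma polyGaussian_landauPoly_eigen {b : ℝ} (hb : 0 ≤ b) (n : ℕ) (y : ℝ) :
    -polyGaussian b (gaussDeriv b (gaussDeriv b (landauPoly b n))) y +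
        b ^ 2 * y ^ 2 * polyGaussian b (landauPoly b n) y =
      b * (2 * n + 1) * polyGaussian b (landauPoly b n) y := by
  rw [landauPoly, gaussDeriv_gaussDeriv_physHermitePoly_comp (Real.sq_sqrt hb)]
  simp only [polyGaussian, eval_mul, eval_sub, eval_C, eval_pow, eval_X]
  ring

end Hermite

lemma wigner_const_mul (b : ℝ) (c : ℂ) (φ g : ℝ → ℂ) (x : ℝ × ℝ) :
    wigner b (fun y => c * φ y) g x = c * wigner b φ g x := by
  simp only [wigner]
  rw [mul_left_comm c, ← integral_const_mul c]
  congr 2 with k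
  ring

/-- For Schwartz `ζ, f` on `ℝ`, the Landau operator maps `W(ζ,f)` to `W(ζ̃,f)` with
`ζ̃ = −ζ'' + b² x² ζ`; in particular `L_A[W(φₙ,f)] = b(2n+1) W(φₙ,f)`. -/
theorem landauOp_wigner (b : ℝ) (hb : 0 < b) (f : SchwartzMap ℝ ℂ) :
    (∀ ζ : SchwartzMap ℝ ℂ, ∀ x : ℝ × ℝ,
      landauOp b (wigner b (⇑ζ) (⇑f)) x =
        wigner b (fun y => -(deriv (deriv (⇑ζ)) y) + (b : ℂ) ^ 2 * y ^ 2 * ζ y) (⇑f) x) ∧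
    (∀ n : ℕ, ∀ x : ℝ × ℝ,
      landauOp b (wigner b (fun y => (landauPhi b n y : ℂ)) (⇑f)) x =
        b * (2 * n + 1) * wigner b (fun y => (landauPhi b n y : ℂ)) (⇑f) x) := by
  have hf₀ : Integrable f := f.integrable
  have hf₁ := by simpa only [pow_one] using f.integrable_ofReal_pow_mul 1
  have hf₂ := f.integrable_ofReal_pow_mul 2
  constructor
  · intro ζ x
    let ζ' := SchwartzMap.derivCLM ℝ ℂ ζ
    let ζ'' := SchwartzMap.derivCLM ℝ ℂ ζ'
    have hζ : ∀ y, HasDerivAt ζ (ζ' y) y := fun y => by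
      simpa only [ζ', SchwartzMap.coe_derivCLM] using ζ.hasDerivAt y
    have hζ' : ∀ y, HasDerivAt ζ' (ζ'' y) y := fun y => by
      simpa only [ζ'', SchwartzMap.coe_derivCLM] using ζ'.hasDerivAt y
    simpa only [ζ'', ζ', SchwartzMap.coe_derivCLM] using
      landauOp_wigner_eq hb.ne' hζ hζ' (SchwartzMap.norm_le_seminorm ℝ ζ)
        (SchwartzMap.norm_le_seminorm ℝ ζ') (SchwartzMap.norm_le_seminorm ℝ ζ'') hf₀ hf₁ hf₂ x
  · intro n x
    set P := landauPoly b n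
    have hφ : (fun y => (landauPhi b n y : ℂ)) = fun y => (polyGaussian b P y : ℂ) := by
      rw [landauPhi_eq_polyGaussian]
    have heigen : (fun y : ℝ => -(polyGaussian b (gaussDeriv b (gaussDeriv b P)) y : ℂ) +
        (b : ℂ) ^ 2 * y ^ 2 * (polyGaussian b P y : ℂ)) =
        fun y => (b * (2 * n + 1) : ℂ) * (polyGaussian b P y : ℂ) := by
      ext y
      exact_mod_cast polyGaussian_landauPoly_eigen hb.le n y
    rw [hφ, landauOp_wigner_polyGaussian hb P hf₀ hf₁ hf₂, heigen, wigner_const_mul]
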